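/- arXiv:1410.3611 — 5 statements merged into one kernel-verified Lean document; each statement's English description precedes it below -/
import Mathlib

section
/- If α is a real number and s is a real number such that cos(kα) + s·sin(kα) > 0 for every natural number k ≥ 1, then the 2×2 rotation matrix by angle α equals the identity matrix (i.e., cos α = 1 and sin α = 0). -/
/-!
Write `c_k = cos (kα)`. Applying the hypothesis at `k` and at `2k` forces `c_k > 0`, so
`cos (2^m α) > 0` for every `m`. Since `cos (2θ) = 2 cos² θ - 1`, positivity of the whole doubling
orbit propagates downwards: by induction on `n`, `cos θ ≥ cos (π / 2^(n+1))` for every such `θ`.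
Letting `n → ∞` gives `cos α = 1`, hence `sin α = 0`.
-/

open Real Matrix Filter Topology

namespace Real

/-- If `x = cos θ`, `y = sin θ` and `t = s y`, the two hypotheses read `x + t > 0` and
`x (x + 2t) > y²`; for `x ≤ 0` the first gives `t > 0`, so `x + 2t > 0` and `x (x + 2t) ≤ 0`. -/
lemma cos_pos_of_add_mul_sin_pos_of_two_mul {θ s : ℝ} (h₁ : 0 < cos θ + s * sin θ)
    (h₂ : 0 < cos (2 * θ) + s * sin (2 * θ)) : 0 < cos θ := by
  rw [cos_two_mul, sin_two_mul] at h₂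
  by_contra! hc
  nlinarith [sin_sq_add_cos_sq θ, sq_nonneg (sin θ)]

lemma cos_nonneg_pi_div_two_pow_succ (n : ℕ) : 0 ≤ cos (π / 2 ^ (n + 1)) := by
  apply cos_nonneg_of_neg_pi_div_two_le_of_le
  · have : 0 ≤ π / 2 ^ (n + 1) := by positivity
    linarith [pi_pos]
  · rw [pow_succ]
    exact div_le_div_of_nonneg_left pi_pos.le two_pos (le_mul_of_one_le_left two_pos.le
      (one_le_pow₀ one_le_two))

lemma cos_pi_div_two_pow_succ_le_of_forall_cos_two_pow_mul_pos (n : ℕ) {θ : ℝ}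
    (h : ∀ m : ℕ, 0 < cos (2 ^ m * θ)) : cos (π / 2 ^ (n + 1)) ≤ cos θ := by
  induction n generalizing θ with
  | zero => simpa using (h 0).le
  | succ n ih =>
    have h2θ : cos (π / 2 ^ (n + 1)) ≤ cos (2 * θ) :=
      ih fun m ↦ by simpa [pow_succ, mul_assoc] using h (m + 1)
    have hhalf : 2 * (π / 2 ^ (n + 1 + 1)) = π / 2 ^ (n + 1) := by
      rw [pow_succ]; field_simp
    rw [← hhalf, cos_two_mul, cos_two_mul] at h2θ
    have hsq : cos (π / 2 ^ (n + 1 + 1)) ^ 2 ≤ cos θ ^ 2 := by linarith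
    exact (pow_le_pow_iff_left₀ (cos_nonneg_pi_div_two_pow_succ _)
      (by simpa using (h 0).le) two_ne_zero).mp hsq

lemma tendsto_cos_pi_div_two_pow_succ :
    Tendsto (fun n : ℕ ↦ cos (π / 2 ^ (n + 1))) atTop (𝓝 1) := by
  have hangle : Tendsto (fun n : ℕ ↦ π / 2 ^ (n + 1)) atTop (𝓝 0) :=
    tendsto_const_nhds.div_atTop
      ((tendsto_pow_atTop_atTop_of_one_lt one_lt_two).comp (tendsto_add_atTop_nat 1))
  simpa only [Function.comp_def, cos_zero] using (continuous_cos.tendsto 0).comp hangle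

theorem cos_eq_one_of_forall_cos_two_pow_mul_pos {θ : ℝ} (h : ∀ m : ℕ, 0 < cos (2 ^ m * θ)) :
    cos θ = 1 :=
  le_antisymm (cos_le_one θ) <| le_of_tendsto' tendsto_cos_pi_div_two_pow_succ fun n ↦
    cos_pi_div_two_pow_succ_le_of_forall_cos_two_pow_mul_pos n h

end Real

theorem stmt_0 (α s : ℝ)
    (h : ∀ k : ℕ, 1 ≤ k → Real.cos (k * α) + s * Real.sin (k * α) > 0) :
    !![Real.cos α, Real.sin α; -Real.sin α, Real.cos α] =
      (1 : Matrix (Fin 2) (Fin 2) ℝ) := by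
  have hpos : ∀ m : ℕ, 0 < cos (2 ^ m * α) := fun m ↦ by
    have h₁ := h (2 ^ m) Nat.one_le_two_pow
    have h₂ := h (2 ^ (m + 1)) Nat.one_le_two_pow
    push_cast at h₁ h₂
    rw [pow_succ', mul_assoc] at h₂
    exact cos_pos_of_add_mul_sin_pos_of_two_mul h₁ h₂
  have hcos : cos α = 1 := cos_eq_one_of_forall_cos_two_pow_mul_pos hpos
  have hsin : sin α = 0 := sin_eq_zero_iff_cos_eq.mpr (Or.inl hcos)
  rw [hcos, hsin, one_fin_two]
  simp
end

section
/- For any real number α that is not an integer multiple of 2π, and any real s, there exists a natural number k ≥ 1 such that cos(kα) + s·sin(kα) ≤ 0. -/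
/-!
Writing `s = tan φ` gives `cos x + s sin x = cos (x - φ) / cos φ` with `cos φ > 0`, so it suffices to
find `k ≥ 1` with `cos (k α - φ) ≤ 0`. Replacing `α` by its representative `β ∈ (-π, π] \ {0}`
modulo `2π`, and then `(β, φ)` by `(-β, -φ)` if needed, we may take `0 < β ≤ π`. The multiples
`k β` then advance in steps of at most `π`, so one of them lands in an interval
`[φ + π/2, φ + 3π/2] + 2πn` of length `π`, where `cos (· - φ)` is nonpositive.
-/

open Real

lemma cos_add_mul_sin_eq_sqrt_mul_cos_sub_arctan (s x : ℝ) :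
    cos x + s * sin x = √(1 + s ^ 2) * cos (x - arctan s) := by
  have hr : √(1 + s ^ 2) ≠ 0 := (sqrt_pos.2 (by positivity)).ne'
  rw [cos_sub, cos_arctan, sin_arctan]
  field_simp

lemma exists_nat_mul_mem_Ico {a β : ℝ} (ha : 0 < a) (hβ : 0 < β) :
    ∃ k : ℕ, 1 ≤ k ∧ a ≤ k * β ∧ k * β < a + β := by
  refine ⟨⌈a / β⌉₊, Nat.ceil_pos.2 (by positivity), ?_, ?_⟩
  · exact (div_le_iff₀ hβ).1 (Nat.le_ceil _)
  · have := Nat.ceil_lt_add_one (div_pos ha hβ).le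
    rwa [← lt_div_iff₀ hβ, add_div, div_self hβ.ne']

lemma exists_cos_nat_mul_sub_nonpos_of_pos {β : ℝ} (hβ : 0 < β) (hβπ : β ≤ π) (φ : ℝ) :
    ∃ k : ℕ, 1 ≤ k ∧ cos (k * β - φ) ≤ 0 := by
  obtain ⟨n, hn⟩ := exists_nat_gt (-(φ + π / 2) / (2 * π))
  rw [div_lt_iff₀ (by positivity)] at hn
  obtain ⟨k, hk, hle, hlt⟩ :=
    exists_nat_mul_mem_Ico (a := φ + π / 2 + n * (2 * π)) (by linarith) hβ
  refine ⟨k, hk, ?_⟩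
  rw [← cos_sub_nat_mul_two_pi _ n]
  apply cos_nonpos_of_pi_div_two_le_of_le <;> linarith

lemma exists_cos_nat_mul_sub_nonpos {β : ℝ} (hβ : β ≠ 0) (hβπ : |β| ≤ π) (φ : ℝ) :
    ∃ k : ℕ, 1 ≤ k ∧ cos (k * β - φ) ≤ 0 := by
  rcases hβ.lt_or_gt with hneg | hpos
  · obtain ⟨k, hk, hcos⟩ :=
      exists_cos_nat_mul_sub_nonpos_of_pos (neg_pos.2 hneg) (by rwa [abs_of_neg hneg] at hβπ) (-φ)
    refine ⟨k, hk, ?_⟩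
    rwa [← cos_neg, show -(k * β - φ) = k * -β - -φ by ring]
  · exact exists_cos_nat_mul_sub_nonpos_of_pos hpos (by rwa [abs_of_pos hpos] at hβπ) φ

theorem stmt_3 (α : ℝ) (hnz : ¬ ∃ m : ℤ, α = m * (2 * π)) (s : ℝ) :
    ∃ k : ℕ, 1 ≤ k ∧ Real.cos (k * α) + s * Real.sin (k * α) ≤ 0 := by
  set β := (α : Angle).toReal
  have hβ : β ≠ 0 := by
    rw [Ne, Angle.toReal_eq_zero_iff, Angle.coe_eq_zero_iff]
    rintro ⟨m, hm⟩
    exact hnz ⟨m, by rw [← hm, zsmul_eq_mul]⟩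
  obtain ⟨k, hk, hcos⟩ := exists_cos_nat_mul_sub_nonpos hβ (Angle.abs_toReal_le_pi _) (arctan s)
  have hcos_eq : cos (k * α - arctan s) = cos (k * β - arctan s) := by
    refine Angle.cos_eq_iff_coe_eq_or_eq_neg.2 (Or.inl ?_)
    simp only [Angle.coe_sub, ← nsmul_eq_mul, Angle.coe_nsmul, β, Angle.coe_toReal]
  refine ⟨k, hk, ?_⟩
  rw [cos_add_mul_sin_eq_sqrt_mul_cos_sub_arctan, hcos_eq]
  exact mul_nonpos_of_nonneg_of_nonpos (sqrt_nonneg _) hcos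
end

section
/- Let A = C·!![cos α, sin α; -sin α, cos α] with C > 0. Suppose there exists s ∈ ℝ such that for all natural numbers k ≥ 1, cos(kα) + s·sin(kα) > 0. Then A = C·(identity matrix). -/
open Matrix Real

theorem stmt_9 (C α : ℝ) (hC : 0 < C)
    (A : Matrix (Fin 2) (Fin 2) ℝ)
    (hA : A = C • !![Real.cos α, Real.sin α; -Real.sin α, Real.cos α])
    (h : ∃ s : ℝ, ∀ k : ℕ, 1 ≤ k → Real.cos (k * α) + s * Real.sin (k * α) > 0) :
    A = C • (1 : Matrix (Fin 2) (Fin 2) ℝ) := by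
  obtain ⟨s, hs⟩ := h
  have key : ∀ A B : ℝ, Real.cos (A+B) + Real.cos (A-B) = 2 * Real.cos B * Real.cos A := by
    intro A B; rw [Real.cos_add, Real.cos_sub]; ring
  have key2 : ∀ A B : ℝ, Real.sin (A+B) + Real.sin (A-B) = 2 * Real.cos B * Real.sin A := by
    intro A B; rw [Real.sin_add, Real.sin_sub]; ring
  have hcos : ∀ m : ℕ, 1 ≤ m → 0 < Real.cos (m * α) := by
    intro m hm
    have h1 := hs 1 le_rfl
    have h2 := hs (m+1) (by omega)
    have h3 := hs (2*m+1) (by omega)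
    push_cast at h1 h2 h3
    simp only [one_mul] at h1
    have e1 := key (((m:ℝ)+1)*α) ((m:ℝ)*α)
    have e2 := key2 (((m:ℝ)+1)*α) ((m:ℝ)*α)
    rw [show ((m:ℝ)+1)*α + (m:ℝ)*α = (2*(m:ℝ)+1)*α by ring,
        show ((m:ℝ)+1)*α - (m:ℝ)*α = α by ring] at e1 e2
    have comb : (Real.cos ((2*(m:ℝ)+1)*α) + s * Real.sin ((2*(m:ℝ)+1)*α))
        + (Real.cos α + s * Real.sin α)
        = 2 * Real.cos ((m:ℝ)*α) * (Real.cos (((m:ℝ)+1)*α) + s * Real.sin (((m:ℝ)+1)*α)) := by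
      linear_combination e1 + s * e2
    by_contra hc
    push_neg at hc
    nlinarith [comb, h1, h2, h3, mul_nonneg (neg_nonneg.mpr hc) (le_of_lt h2)]
  have hp : ∀ n : ℕ, 2^n * (1 - Real.cos α) ≤ 1 - Real.cos ((2^n : ℕ) * α) := by
    intro n
    induction n with
    | zero => simp
    | succ n ih =>
      have hpos : 0 < Real.cos ((2^n : ℕ) * α) := hcos (2^n) (Nat.one_le_two_pow)
      have hle : Real.cos α ≤ 1 := Real.cos_le_one α
      have hdb : Real.cos ((2^(n+1) : ℕ) * α) = 2 * Real.cos ((2^n : ℕ) * α) ^ 2 - 1 := by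
        rw [show ((2^(n+1) : ℕ) : ℝ) * α = 2 * (((2^n : ℕ) : ℝ) * α) by push_cast; ring]
        exact Real.cos_two_mul _
      have hc1 : Real.cos ((2^n : ℕ) * α) ≤ 1 := Real.cos_le_one _
      rw [hdb, pow_succ]
      have h2n : (0:ℝ) ≤ 2^n := by positivity
      nlinarith [ih, hpos, hc1, hle, mul_nonneg (sub_nonneg.mpr hc1) hpos.le]
  have hca : Real.cos α = 1 := by
    by_contra hne
    have hlt : 0 < 1 - Real.cos α := by
      have := Real.cos_le_one α
      cases lt_or_eq_of_le this with
      | inl h => linarith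
      | inr h => exact absurd h hne
    obtain ⟨n, hn⟩ := pow_unbounded_of_one_lt (2 / (1 - Real.cos α)) (by norm_num : (1:ℝ) < 2)
    have hb : 1 - Real.cos ((2^n : ℕ) * α) ≤ 2 := by
      have := Real.neg_one_le_cos ((2^n : ℕ) * α); linarith
    have := hp n
    have : 2 / (1 - Real.cos α) * (1 - Real.cos α) < 2^n * (1 - Real.cos α) := by
      exact mul_lt_mul_of_pos_right hn hlt
    rw [div_mul_cancel₀] at this
    · linarith
    · linarith
  have hsa : Real.sin α = 0 := by
    have := Real.sin_sq_add_cos_sq α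
    nlinarith
  rw [hA, hca, hsa]
  congr 1
  ext i j
  fin_cases i <;> fin_cases j <;> simp [Matrix.one_apply]
end

section
/- Let V be a 2-dimensional real vector space with a distinguished convex cone P ⊆ V closed under positive scaling and a fixed element σ ∈ P. Let T : V → V be a linear automorphism whose matrix in a basis (σ, σ̄) is C·R(α) (C > 0, R(α) the rotation by α), and suppose T^k(σ) ∈ P for all k ≥ 1, where P is the set of elements aσ + bσ̄ such that a + b·sᵢ > 0 for all i = 1,…,n (fixed reals s₁,…,sₙ). Then R(α) is the identity. -/
open Matrix Real

lemma geom_re_bound (w z : ℂ) (hz : ‖z‖ = 1) (hz1 : z ≠ 1) (N : ℕ) :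
    |∑ k ∈ Finset.range N, (w * z ^ (k + 1)).re| ≤ ‖w‖ * 2 / ‖z - 1‖ := by
  have hzne : ‖z - 1‖ > 0 := by
    exact norm_pos_iff.mpr (sub_ne_zero.mpr hz1)
  have h1 : ∑ k ∈ Finset.range N, (w * z ^ (k + 1)).re
      = (w * z * ((z ^ N - 1) / (z - 1))).re := by
    rw [← Complex.re_sum]
    congr 1
    rw [← geom_sum_eq hz1, Finset.mul_sum]
    congr 1; ext k; ring
  have habs : ‖z ^ N - 1‖ ≤ 2 := by
    calc ‖z ^ N - 1‖ ≤ ‖z ^ N‖ + ‖(1 : ℂ)‖ :=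
          norm_sub_le _ _
      _ = 2 := by rw [norm_pow, hz, one_pow, norm_one]; norm_num
  rw [h1]
  calc |(w * z * ((z ^ N - 1) / (z - 1))).re| ≤ ‖w * z * ((z ^ N - 1) / (z - 1))‖ :=
        Complex.abs_re_le_norm _
    _ = ‖w‖ * (‖z ^ N - 1‖ / ‖z - 1‖) := by
        rw [norm_mul, norm_mul, norm_div, hz, mul_one]
    _ ≤ ‖w‖ * (2 / ‖z - 1‖) := by gcongr
    _ = ‖w‖ * 2 / ‖z - 1‖ := by ring

theorem stmt_10 (n : ℕ) (hn : 1 ≤ n) (s : Fin n → ℝ) (C α : ℝ) (hC : 0 < C)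
    (A : Matrix (Fin 2) (Fin 2) ℝ)
    (hA : A = C • !![Real.cos α, Real.sin α; -Real.sin α, Real.cos α])
    (h : ∀ k : ℕ, 1 ≤ k → ∀ i : Fin n,
        (A ^ k).mulVec ![1, 0] 0 + (A ^ k).mulVec ![1, 0] 1 * s i > 0) :
    Real.cos α = 1 ∧ Real.sin α = 0 := by
  have hpow : ∀ k : ℕ, A ^ k = (C ^ k) • !![Real.cos (k * α), Real.sin (k * α);
      -Real.sin (k * α), Real.cos (k * α)] := by
    intro k
    induction k with
    | zero => simp [Matrix.one_fin_two]
    | succ k ih =>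
      rw [pow_succ, ih, hA]
      ext i j
      fin_cases i <;> fin_cases j <;>
        · simp [Matrix.mul_apply, Fin.sum_univ_two, Real.cos_add, Real.sin_add]
          push_cast [add_mul, Real.cos_add, Real.sin_add]
          ring_nf
  set s0 : ℝ := s ⟨0, hn⟩ with hs0
  -- the positive sequence
  set u : ℕ → ℝ := fun k => Real.cos (((k : ℝ) + 1) * α) - Real.sin (((k : ℝ) + 1) * α) * s0
    with hu_def
  have hu : ∀ k : ℕ, 0 < u k := by
    intro k
    have hk := h (k + 1) (by omega) ⟨0, hn⟩
    rw [hpow (k + 1)] at hk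
    simp [Matrix.mulVec, dotProduct, Fin.sum_univ_two] at hk
    have hCk : 0 < C ^ (k + 1) := pow_pos hC _
    simp only [hu_def]
    nlinarith [hk]
  -- complex setup
  set z : ℂ := Complex.exp (α * Complex.I) with hz_def
  have hzabs : ‖z‖ = 1 := Complex.norm_exp_ofReal_mul_I α
  by_contra hcon
  have hz1 : z ≠ 1 := by
    intro hzz
    apply hcon
    constructor
    · have := congrArg Complex.re hzz
      simpa [hz_def, Complex.exp_ofReal_mul_I_re] using this
    · have := congrArg Complex.im hzz
      simpa [hz_def, Complex.exp_ofReal_mul_I_im] using this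
  have hz2 : z ^ 2 ≠ 1 := by
    intro hzz
    have hfac : (z - 1) * (z + 1) = 0 := by linear_combination hzz
    rcases mul_eq_zero.mp hfac with h1 | h1
    · exact hz1 (sub_eq_zero.mp h1)
    · have hzm : z = -1 := by linear_combination h1
      have hcos : Real.cos α = -1 := by
        have := congrArg Complex.re hzm
        simpa [hz_def, Complex.exp_ofReal_mul_I_re] using this
      have hsin : Real.sin α = 0 := by
        have := congrArg Complex.im hzm
        simpa [hz_def, Complex.exp_ofReal_mul_I_im] using this
      have h0 := hu 0
      simp only [hu_def] at h0
      push_cast at h0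
      rw [show ((0 : ℝ) + 1) * α = α by ring] at h0
      rw [hcos, hsin] at h0
      norm_num at h0
  -- representation of u
  have hzk : ∀ k : ℕ, z ^ (k + 1) = Complex.exp ((((k : ℝ) + 1) * α : ℝ) * Complex.I) := by
    intro k
    rw [hz_def, ← Complex.exp_nat_mul]
    congr 1
    push_cast
    ring
  have hrep : ∀ k : ℕ, u k = ((1 + (s0 : ℂ) * Complex.I) * z ^ (k + 1)).re := by
    intro k
    rw [hzk k]
    simp only [Complex.add_re, Complex.add_im, Complex.mul_re, Complex.mul_im,
      Complex.one_re, Complex.one_im, Complex.ofReal_re, Complex.ofReal_im,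
      Complex.I_re, Complex.I_im, Complex.exp_ofReal_mul_I_re, Complex.exp_ofReal_mul_I_im, hu_def]
    ring
  have hz2k : ∀ k : ℕ, (z ^ 2) ^ (k + 1)
      = Complex.exp (((2 * (((k : ℝ) + 1) * α)) : ℝ) * Complex.I) := by
    intro k
    rw [← pow_mul, hz_def, ← Complex.exp_nat_mul]
    congr 1
    push_cast
    ring
  have hrep2 : ∀ k : ℕ, (u k) ^ 2 = (1 + s0 ^ 2) / 2
      + ((((1 - s0 ^ 2) / 2 : ℝ) + (s0 : ℂ) * Complex.I) * (z ^ 2) ^ (k + 1)).re := by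
    intro k
    rw [hz2k k]
    simp only [Complex.add_re, Complex.add_im, Complex.mul_re, Complex.mul_im,
      Complex.one_re, Complex.one_im, Complex.ofReal_re, Complex.ofReal_im,
      Complex.I_re, Complex.I_im, Complex.exp_ofReal_mul_I_re, Complex.exp_ofReal_mul_I_im, hu_def]
    rw [Real.cos_two_mul, Real.sin_two_mul]
    linear_combination (s0 ^ 2) * (Real.sin_sq_add_cos_sq (((k : ℝ) + 1) * α))
  -- summability of u
  set M1 : ℝ := ‖1 + (s0 : ℂ) * Complex.I‖ * 2 / ‖z - 1‖ with hM1
  have hbd1 : ∀ N : ℕ, ∑ k ∈ Finset.range N, u k ≤ M1 := by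
    intro N
    calc ∑ k ∈ Finset.range N, u k
        = ∑ k ∈ Finset.range N, ((1 + (s0 : ℂ) * Complex.I) * z ^ (k + 1)).re := by
          exact Finset.sum_congr rfl fun k _ => hrep k
      _ ≤ |∑ k ∈ Finset.range N, ((1 + (s0 : ℂ) * Complex.I) * z ^ (k + 1)).re| := le_abs_self _
      _ ≤ M1 := geom_re_bound _ z hzabs hz1 N
  have hsum : Summable u := summable_of_sum_range_le (fun k => (hu k).le) hbd1
  have huM1 : ∀ k : ℕ, u k ≤ M1 := by
    intro k
    have h1 : u k ≤ ∑ j ∈ Finset.range (k + 1), u j := by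
      have := Finset.single_le_sum (f := u) (fun j _ => (hu j).le)
        (Finset.self_mem_range_succ k)
      exact this
    exact h1.trans (hbd1 (k + 1))
  have hsum2 : Summable (fun k => (u k) ^ 2) := by
    apply Summable.of_nonneg_of_le (fun k => sq_nonneg _) (fun k => ?_) (hsum.mul_left M1)
    calc (u k) ^ 2 = u k * u k := sq (u k) ▸ by ring
      _ ≤ M1 * u k := mul_le_mul_of_nonneg_right (huM1 k) (hu k).le
  -- lower bound on partial sums of u^2
  set M2 : ℝ := ‖(((1 - s0 ^ 2) / 2 : ℝ) : ℂ) + (s0 : ℂ) * Complex.I‖ * 2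
      / ‖z ^ 2 - 1‖ with hM2
  have hbd2 : ∀ N : ℕ, (N : ℝ) * ((1 + s0 ^ 2) / 2) - M2 ≤ ∑ k ∈ Finset.range N, (u k) ^ 2 := by
    intro N
    have e1 : ∑ k ∈ Finset.range N, (u k) ^ 2
        = (N : ℝ) * ((1 + s0 ^ 2) / 2)
          + ∑ k ∈ Finset.range N,
              ((((1 - s0 ^ 2) / 2 : ℝ) + (s0 : ℂ) * Complex.I) * (z ^ 2) ^ (k + 1)).re := by
      rw [Finset.sum_congr rfl fun k _ => hrep2 k, Finset.sum_add_distrib]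
      simp [Finset.sum_const, Finset.card_range]
      try ring
    have e2 := geom_re_bound ((((1 - s0 ^ 2) / 2 : ℝ) : ℂ) + (s0 : ℂ) * Complex.I) (z ^ 2)
      (by rw [norm_pow, hzabs, one_pow]) hz2 N
    rw [e1]
    have := neg_abs_le (∑ k ∈ Finset.range N,
      ((((1 - s0 ^ 2) / 2 : ℝ) + (s0 : ℂ) * Complex.I) * (z ^ 2) ^ (k + 1)).re)
    linarith
  -- contradiction
  have hub : ∀ N : ℕ, ∑ k ∈ Finset.range N, (u k) ^ 2 ≤ ∑' k, (u k) ^ 2 := by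
    intro N
    exact Summable.sum_le_tsum (Finset.range N) (fun k _ => sq_nonneg _) hsum2
  obtain ⟨N, hN⟩ := exists_nat_gt ((∑' k, (u k) ^ 2 + M2) / ((1 + s0 ^ 2) / 2))
  have hpos : (0 : ℝ) < (1 + s0 ^ 2) / 2 := by positivity
  have h1 := hbd2 N
  have h2 := hub N
  rw [div_lt_iff₀ hpos] at hN
  linarith
end

section
/- Let u be a complex number with |u| = 1 and u ≠ 1, and let w be any nonzero complex number. Then there exists k ≥ 1 such that Re(u^k · w) ≤ 0. -/
/-!
Write `u = e^{iθ}` with `θ = arg u ∈ (-π, π] \ {0}`, so that `Re (u^k w) = ‖w‖ cos (kθ + arg w)`.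
Up to a sign, `0 < θ ≤ π`; the points `kθ + arg w` then advance by steps of length at most `π`,
so one of them lands in an arc `[π/2 + 2πn, 3π/2 + 2πn]`, where the cosine is nonpositive.
-/

open Complex

theorem exists_add_nat_mul_mem_Ico {α : Type*} [Field α] [LinearOrder α] [IsStrictOrderedRing α]
    [FloorSemiring α] {x a θ : α} (hθ : 0 < θ) (hxa : x ≤ a) :
    ∃ k : ℕ, x + k * θ ∈ Set.Ico a (a + θ) := by
  have hq : 0 ≤ (a - x) / θ := div_nonneg (sub_nonneg.2 hxa) hθ.le
  refine ⟨⌈(a - x) / θ⌉₊, ?_, ?_⟩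
  · have := (div_le_iff₀ hθ).1 (Nat.le_ceil ((a - x) / θ))
    linarith
  · have h := Nat.ceil_lt_add_one hq
    rw [← sub_lt_iff_lt_add, lt_div_iff₀ hθ] at h
    linarith

namespace Real

theorem exists_cos_add_nat_mul_nonpos {θ : ℝ} (φ : ℝ) (hθ : 0 < θ) (hθπ : θ ≤ π) :
    ∃ k : ℕ, 1 ≤ k ∧ cos (φ + k * θ) ≤ 0 := by
  obtain ⟨n, hn⟩ := exists_nat_ge (φ + θ)
  obtain ⟨j, hj₁, hj₂⟩ := exists_add_nat_mul_mem_Ico (x := φ + θ) (a := π / 2 + n * (2 * π)) hθ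
    (by nlinarith [pi_gt_three, n.cast_nonneg (α := ℝ)])
  refine ⟨j + 1, Nat.le_add_left 1 j, ?_⟩
  rw [← cos_sub_nat_mul_two_pi _ n]
  apply cos_nonpos_of_pi_div_two_le_of_le <;> push_cast <;> linarith

theorem exists_cos_nat_mul_add_nonpos {θ : ℝ} (φ : ℝ) (hθ : θ ∈ Set.Ioc (-π) π) (hθ₀ : θ ≠ 0) :
    ∃ k : ℕ, 1 ≤ k ∧ cos (k * θ + φ) ≤ 0 := by
  rcases hθ₀.lt_or_gt with hneg | hpos
  · obtain ⟨k, hk, hcos⟩ := exists_cos_add_nat_mul_nonpos (-φ) (neg_pos.2 hneg) (by linarith [hθ.1])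
    refine ⟨k, hk, ?_⟩
    rwa [← cos_neg, neg_add, ← mul_neg, add_comm]
  · obtain ⟨k, hk, hcos⟩ := exists_cos_add_nat_mul_nonpos φ hpos hθ.2
    exact ⟨k, hk, by rwa [add_comm]⟩

end Real

namespace Complex

theorem exp_arg_mul_I_of_norm_eq_one {u : ℂ} (hu : ‖u‖ = 1) : exp (arg u * I) = u := by
  simpa [hu] using norm_mul_exp_arg_mul_I u

theorem re_pow_mul_of_norm_eq_one {u : ℂ} (hu : ‖u‖ = 1) (w : ℂ) (k : ℕ) :
    (u ^ k * w).re = ‖w‖ * Real.cos (k * arg u + arg w) := by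
  conv_lhs => rw [← exp_arg_mul_I_of_norm_eq_one hu, ← norm_mul_exp_arg_mul_I w, ← exp_nat_mul,
    mul_left_comm, ← exp_add]
  rw [re_ofReal_mul, ← exp_ofReal_mul_I_re]
  push_cast
  ring_nf

theorem arg_ne_zero_of_norm_eq_one {u : ℂ} (hu : ‖u‖ = 1) (hu₁ : u ≠ 1) : arg u ≠ 0 := by
  intro h
  rw [← exp_arg_mul_I_of_norm_eq_one hu, h] at hu₁
  simp at hu₁

end Complex

theorem stmt_15_general (u w : ℂ) (hu : ‖u‖ = 1) (hu1 : u ≠ 1) :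
    ∃ k : ℕ, 1 ≤ k ∧ (u ^ k * w).re ≤ 0 := by
  obtain ⟨k, hk, hcos⟩ := Real.exists_cos_nat_mul_add_nonpos (arg w) (arg_mem_Ioc u)
    (arg_ne_zero_of_norm_eq_one hu hu1)
  refine ⟨k, hk, ?_⟩
  rw [re_pow_mul_of_norm_eq_one hu]
  exact mul_nonpos_of_nonneg_of_nonpos (norm_nonneg w) hcos

theorem stmt_15 (u w : ℂ) (hu : ‖u‖ = 1) (hu1 : u ≠ 1) (hw : w ≠ 0) :
    ∃ k : ℕ, 1 ≤ k ∧ (u ^ k * w).re ≤ 0 :=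
  stmt_15_general u w hu hu1
end
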